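/- arXiv:1812.01876 — 3 statements merged into one kernel-verified Lean document; each statement's English description precedes it below -/
import Mathlib

section
/- Let (X,d,μ) be a metric measure space with μ doubling, let 1 < p < ∞, q = p/(p-1), and let t ≥ 1. Suppose C ≥ 0 is a constant such that ‖M^{ut}_μ h‖_{L^q(μ)} ≤ C‖h‖_{L^q(μ)} for every h ∈ L^q(μ). Then for every finite sequence of closed balls B^cl(x_n, r_n), 1 ≤ n ≤ N, every finite sequence of weights w_n > 0, and every finite sequence of dilations t_n with 1 ≤ t_n ≤ t, one has ‖ Σ_{n=1}^N w_n · 1_{B^cl(x_n, r_n)} / μ(B^cl(x_n, r_n)) ‖_{L^p(μ)} ≤ C · ‖ Σ_{n=1}^N w_n · 1_{B^cl(x_n, t_n r_n)} / μ(B^cl(x_n, t_n r_n)) ‖_{L^p(μ)}. -/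
/-! Duality. Write `F` and `G` for the two sums and pair `F` with `h = F^{p-1}`, so that
`∫ F h = ‖F‖_p^p` and `‖h‖_q = ‖F‖_p^{p/q}`. Then `∫ F h = Σ w_n ⨍_{B_n} |h|`, and every point `y`
of the dilated ball `B(x_n, t_n r_n)` lies at distance `< t s` from `x_n` for every `s > r_n`, so
`⨍_{B_n} |h| ≤ M h(y)` there (continuity of `μ` from above as `s ↓ r_n`). Averaging over the dilated ball gives
`∫ F h ≤ Σ w_n ⨍_{B(x_n, t_n r_n)} M h = ∫ G · M h ≤ ‖G‖_p ‖M h‖_q ≤ C ‖G‖_p ‖h‖_q` by Hölder,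
and dividing by `‖h‖_q` gives the claim. -/

open MeasureTheory Metric ENNReal Set

noncomputable section

/-- The expanded uncentered maximal operator `M^{ut}_μ`. -/
def expandedUncenteredMaximal {X : Type*} [MetricSpace X] [MeasurableSpace X]
    (μ : Measure X) (t : ℝ) (g : X → ℝ) (x : X) : ℝ≥0∞ :=
  ⨆ (y : X) (r : ℝ) (_ : 0 < r) (_ : dist x y < t * r) (_ : 0 < μ (closedBall y r)),
    (∫⁻ z in closedBall y (t * r), ‖g z‖₊ ∂μ) / μ (closedBall y r)

/-- The `L^p(μ)` norm of a nonnegative (extended-real-valued) function. -/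
def lpNorm {X : Type*} [MeasurableSpace X] (μ : Measure X) (p : ℝ) (F : X → ℝ≥0∞) : ℝ≥0∞ :=
  (∫⁻ x, F x ^ p ∂μ) ^ (1 / p)

open Filter Topology

theorem ENNReal.rpow_one_div_le_of_le_mul_rpow {p q : ℝ} (hpq : p.HolderConjugate q)
    {I A : ℝ≥0∞} (hI : I ≠ ∞) (h : I ≤ A * I ^ (1 / q)) : I ^ (1 / p) ≤ A := by
  rcases eq_or_ne I 0 with rfl | hI0
  · rw [ENNReal.zero_rpow_of_pos (one_div_pos.2 hpq.pos)]
    exact zero_le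
  have hexp : 1 / p = 1 - 1 / q := by
    rw [one_div, one_div, ← hpq.inv_add_inv_eq_one]
    ring
  rw [hexp, ENNReal.rpow_sub _ _ hI0 hI, ENNReal.rpow_one]
  exact ENNReal.div_le_of_le_mul h

theorem lpNorm_le_of_forall_lintegral_mul_le {α : Type*} [MeasurableSpace α] {μ : Measure α}
    {p q : ℝ} (hpq : p.HolderConjugate q) {F : α → ℝ≥0∞} (hF : Measurable F)
    (hF_ne_top : ∀ y, F y ≠ ∞) (hFp : ∫⁻ y, F y ^ p ∂μ ≠ ∞) {A : ℝ≥0∞}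
    (hA : ∀ h : α → ℝ, Measurable h → MemLp h (ENNReal.ofReal q) μ →
      ∫⁻ y, F y * ‖h y‖ₑ ∂μ ≤ A * lpNorm μ q (‖h ·‖ₑ)) :
    lpNorm μ p F ≤ A := by
  set h : α → ℝ := fun y => (F y ^ (p - 1)).toReal
  have hp1 : 0 ≤ p - 1 := sub_nonneg.2 hpq.lt.le
  have h_enorm : ∀ y, ‖h y‖ₑ = F y ^ (p - 1) := fun y => by
    rw [Real.enorm_of_nonneg ENNReal.toReal_nonneg,
      ENNReal.ofReal_toReal (ENNReal.rpow_ne_top_of_nonneg hp1 (hF_ne_top y))]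
  have hhq : ∀ y, ‖h y‖ₑ ^ q = F y ^ p := fun y => by
    rw [h_enorm, ← ENNReal.rpow_mul, hpq.sub_one_mul_conj]
  have hpair : ∀ y, F y * ‖h y‖ₑ = F y ^ p := fun y => by
    have := ENNReal.rpow_add_of_nonneg (x := F y) 1 (p - 1) zero_le_one hp1
    rwa [add_sub_cancel, ENNReal.rpow_one, eq_comm, ← h_enorm] at this
  have hmem : MemLp h (ENNReal.ofReal q) μ := by
    refine ⟨(hF.pow_const _).ennreal_toReal.aestronglyMeasurable, ?_⟩
    rw [eLpNorm_eq_lintegral_rpow_enorm_toReal (ENNReal.ofReal_pos.2 hpq.symm.pos).ne'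
      ENNReal.ofReal_ne_top, ENNReal.toReal_ofReal hpq.symm.nonneg]
    simp only [hhq]
    exact ENNReal.rpow_lt_top_of_nonneg (one_div_nonneg.2 hpq.symm.nonneg) hFp
  refine ENNReal.rpow_one_div_le_of_le_mul_rpow hpq hFp ?_
  calc ∫⁻ y, F y ^ p ∂μ = ∫⁻ y, F y * ‖h y‖ₑ ∂μ := by simp only [hpair]
    _ ≤ A * lpNorm μ q (‖h ·‖ₑ) := hA h (hF.pow_const _).ennreal_toReal hmem
    _ = A * (∫⁻ y, F y ^ p ∂μ) ^ (1 / q) := by simp only [_root_.lpNorm, hhq]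

section PseudoMetricSpace

variable {X : Type*} [PseudoMetricSpace X] [MeasurableSpace X]

theorem measure_ball_pos_of_doubling {μ : Measure X} (hμ : μ ≠ 0) {Cd : ℝ≥0∞}
    (hdoub : ∀ (x : X) (r : ℝ), 0 < r → μ (ball x (2 * r)) ≤ Cd * μ (ball x r))
    (x : X) {r : ℝ} (hr : 0 < r) : 0 < μ (ball x r) := by
  refine pos_iff_ne_zero.2 fun h0 => hμ (Measure.measure_univ_eq_zero.1 ?_)
  have hk : ∀ k : ℕ, μ (ball x (2 ^ k * r)) = 0 := by
    intro k
    induction k with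
    | zero => simpa using h0
    | succ k ih =>
      rw [pow_succ', mul_assoc]
      exact le_antisymm ((hdoub x _ (by positivity)).trans (by rw [ih, mul_zero])) zero_le
  have hcover : univ ⊆ ⋃ k : ℕ, ball x (2 ^ k * r) := fun y _ => by
    obtain ⟨k, hk⟩ := pow_unbounded_of_one_lt (dist y x / r) one_lt_two
    exact mem_iUnion.2 ⟨k, mem_ball.2 ((div_lt_iff₀ hr).1 hk)⟩
  exact measure_mono_null hcover (measure_iUnion_null hk)

theorem tendsto_measure_closedBall_nhdsGT [OpensMeasurableSpace X] {μ : Measure X} (x : X)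
    {r : ℝ} (hfin : ∃ R > r, μ (closedBall x R) ≠ ∞) :
    Tendsto (fun s => μ (closedBall x s)) (𝓝[>] r) (𝓝 (μ (closedBall x r))) := by
  rw [← biInter_gt_closedBall x r]
  exact tendsto_measure_biInter_gt (fun s _ => measurableSet_closedBall.nullMeasurableSet)
    (fun _ _ _ hij => closedBall_subset_closedBall hij) hfin

end PseudoMetricSpace

section MetricSpace

variable {X : Type*} [MetricSpace X] [MeasurableSpace X]

theorem lowerSemicontinuous_expandedUncenteredMaximal (μ : Measure X) (t : ℝ) (g : X → ℝ) :
    LowerSemicontinuous (expandedUncenteredMaximal μ t g) := by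
  refine lowerSemicontinuous_iff_isOpen_preimage.2 fun c => Metric.isOpen_iff.2 fun x hx => ?_
  simp only [mem_preimage, mem_Ioi, expandedUncenteredMaximal, lt_iSup_iff] at hx
  obtain ⟨y, r, hr, hxy, hμr, hc⟩ := hx
  refine ⟨t * r - dist x y, sub_pos.2 hxy, fun x' hx' => ?_⟩
  have hx'y : dist x' y < t * r := by
    linarith [dist_triangle x' x y, mem_ball.1 hx']
  simp only [mem_preimage, mem_Ioi, expandedUncenteredMaximal, lt_iSup_iff]
  exact ⟨y, r, hr, hx'y, hμr, hc⟩

theorem setLAverage_le_expandedUncenteredMaximal [OpensMeasurableSpace X] {μ : Measure X}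
    {x₀ y : X} {r₀ t₀ t : ℝ} (hfin : ∀ s, μ (closedBall x₀ s) ≠ ∞)
    (h0 : μ (closedBall x₀ r₀) ≠ 0) (ht₀ : 1 ≤ t₀) (ht₀t : t₀ ≤ t) (g : X → ℝ)
    (hy : y ∈ closedBall x₀ (t₀ * r₀)) :
    ⨍⁻ z in closedBall x₀ r₀, ‖g z‖ₑ ∂μ ≤ expandedUncenteredMaximal μ t g y := by
  have hr₀ : 0 ≤ r₀ := nonempty_closedBall.1 (nonempty_of_measure_ne_zero h0)
  have hlim : Tendsto (fun s => (∫⁻ z in closedBall x₀ r₀, ‖g z‖ₑ ∂μ) / μ (closedBall x₀ s))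
      (𝓝[>] r₀) (𝓝 (⨍⁻ z in closedBall x₀ r₀, ‖g z‖ₑ ∂μ)) := by
    rw [setLAverage_eq]
    exact ENNReal.Tendsto.const_div
      (tendsto_measure_closedBall_nhdsGT x₀ ⟨r₀ + 1, by linarith, hfin _⟩) (Or.inl (hfin r₀))
  refine le_of_tendsto hlim (eventually_nhdsWithin_of_forall fun s (hs : r₀ < s) => ?_)
  have hdist : dist y x₀ < t * s := calc
    dist y x₀ ≤ t₀ * r₀ := hy
    _ ≤ t * r₀ := by gcongr
    _ < t * s := by gcongr; linarith
  have hμs : 0 < μ (closedBall x₀ s) :=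
    (pos_iff_ne_zero.2 h0).trans_le (measure_mono (closedBall_subset_closedBall hs.le))
  calc (∫⁻ z in closedBall x₀ r₀, ‖g z‖ₑ ∂μ) / μ (closedBall x₀ s)
      ≤ (∫⁻ z in closedBall x₀ (t * s), ‖g z‖ₑ ∂μ) / μ (closedBall x₀ s) := by
        gcongr
        nlinarith
    _ ≤ expandedUncenteredMaximal μ t g y :=
        le_iSup_of_le x₀ <| le_iSup_of_le s <| le_iSup_of_le (hr₀.trans_lt hs) <|
          le_iSup_of_le hdist <| le_iSup_of_le hμs le_rfl

def normalizedBallSum {ι : Type*} [Fintype ι] (μ : Measure X) (x : ι → X) (ρ w : ι → ℝ)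
    (y : X) : ℝ≥0∞ :=
  ∑ n, (closedBall (x n) (ρ n)).indicator
    (fun _ => ENNReal.ofReal (w n) / μ (closedBall (x n) (ρ n))) y

variable {ι : Type*} [Fintype ι] {μ : Measure X} {x : ι → X} {ρ w : ι → ℝ}

theorem measurable_normalizedBallSum [OpensMeasurableSpace X] :
    Measurable (normalizedBallSum μ x ρ w) :=
  Finset.measurable_sum _ fun _ _ => measurable_const.indicator measurableSet_closedBall

theorem normalizedBallSum_ne_top (hpos : ∀ n, μ (closedBall (x n) (ρ n)) ≠ 0) (y : X) :
    normalizedBallSum μ x ρ w y ≠ ∞ :=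
  ENNReal.sum_ne_top.2 fun n _ => ne_top_of_le_ne_top
    (ENNReal.div_ne_top ENNReal.ofReal_ne_top (hpos n))
    (indicator_le_self' (fun _ _ => zero_le) y)

theorem lintegral_normalizedBallSum_rpow_ne_top [OpensMeasurableSpace X]
    (hpos : ∀ n, μ (closedBall (x n) (ρ n)) ≠ 0) (hfin : ∀ n, μ (closedBall (x n) (ρ n)) ≠ ∞)
    {p : ℝ} (hp : 0 < p) :
    ∫⁻ y, normalizedBallSum μ x ρ w y ^ p ∂μ ≠ ∞ := by
  set S := ⋃ n, closedBall (x n) (ρ n)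
  set c := ∑ n, ENNReal.ofReal (w n) / μ (closedBall (x n) (ρ n))
  have hle : ∀ y, normalizedBallSum μ x ρ w y ^ p ≤ S.indicator (fun _ => c ^ p) y := fun y => by
    by_cases hy : y ∈ S
    · rw [indicator_of_mem hy]
      gcongr
      exact Finset.sum_le_sum fun n _ => indicator_le_self' (fun _ _ => zero_le) y
    · have hzero : normalizedBallSum μ x ρ w y = 0 := Finset.sum_eq_zero fun n _ =>
        indicator_of_notMem (fun hn => hy (mem_iUnion.2 ⟨n, hn⟩)) _
      rw [hzero, ENNReal.zero_rpow_of_pos hp]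
      exact zero_le
  refine ne_top_of_le_ne_top ?_ (lintegral_mono hle)
  rw [lintegral_indicator_const (MeasurableSet.iUnion fun _ => measurableSet_closedBall)]
  refine ENNReal.mul_ne_top (ENNReal.rpow_ne_top_of_nonneg hp.le ?_) ?_
  · exact ENNReal.sum_ne_top.2 fun n _ => ENNReal.div_ne_top ENNReal.ofReal_ne_top (hpos n)
  · exact ne_top_of_le_ne_top (ENNReal.sum_ne_top.2 fun n _ => hfin n)
      (measure_iUnion_fintype_le μ _)

theorem lintegral_normalizedBallSum_mul [OpensMeasurableSpace X] {Φ : X → ℝ≥0∞}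
    (hΦ : Measurable Φ) :
    ∫⁻ z, normalizedBallSum μ x ρ w z * Φ z ∂μ
      = ∑ n, ENNReal.ofReal (w n) * ⨍⁻ z in closedBall (x n) (ρ n), Φ z ∂μ := by
  simp only [normalizedBallSum, Finset.sum_mul, ← indicator_mul_left _ _ Φ]
  rw [lintegral_finsetSum _ fun n _ => (hΦ.const_mul _).indicator measurableSet_closedBall]
  refine Finset.sum_congr rfl fun n _ => ?_
  rw [lintegral_indicator measurableSet_closedBall, lintegral_const_mul _ hΦ, setLAverage_eq,
    div_eq_mul_inv, div_eq_mul_inv]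
  ring

theorem setLAverage_le_setLAverage_expandedUncenteredMaximal [OpensMeasurableSpace X] {x₀ : X}
    {r₀ t₀ t : ℝ} (hfin : ∀ s, μ (closedBall x₀ s) ≠ ∞) (ht₀ : 1 ≤ t₀) (ht₀t : t₀ ≤ t) (g : X → ℝ) :
    ⨍⁻ z in closedBall x₀ r₀, ‖g z‖ₑ ∂μ
      ≤ ⨍⁻ z in closedBall x₀ (t₀ * r₀), expandedUncenteredMaximal μ t g z ∂μ := by
  rcases eq_or_ne (μ (closedBall x₀ r₀)) 0 with h0 | h0
  · rw [setLAverage_eq, setLIntegral_measure_zero _ _ h0, ENNReal.zero_div]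
    exact zero_le
  have hsub : closedBall x₀ r₀ ⊆ closedBall x₀ (t₀ * r₀) :=
    closedBall_subset_closedBall <|
      le_mul_of_one_le_left (nonempty_closedBall.1 (nonempty_of_measure_ne_zero h0)) ht₀
  calc ⨍⁻ z in closedBall x₀ r₀, ‖g z‖ₑ ∂μ
      = ⨍⁻ _ in closedBall x₀ (t₀ * r₀), (⨍⁻ z in closedBall x₀ r₀, ‖g z‖ₑ ∂μ) ∂μ :=
        (setLAverage_const (fun h => h0 (measure_mono_null hsub h)) (hfin _) _).symm
    _ ≤ ⨍⁻ z in closedBall x₀ (t₀ * r₀), expandedUncenteredMaximal μ t g z ∂μ :=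
        laverage_mono_ae <| (ae_restrict_iff' measurableSet_closedBall).2 <|
          .of_forall fun y hy => setLAverage_le_expandedUncenteredMaximal hfin h0 ht₀ ht₀t g hy

theorem lintegral_normalizedBallSum_mul_le_maximal [OpensMeasurableSpace X]
    (hfin : ∀ n s, μ (closedBall (x n) s) ≠ ∞) {t : ℝ} {tn : ι → ℝ} (htn : ∀ n, 1 ≤ tn n ∧ tn n ≤ t)
    {g : X → ℝ} (hg : Measurable g) :
    ∫⁻ z, normalizedBallSum μ x ρ w z * ‖g z‖ₑ ∂μ
      ≤ ∫⁻ z, normalizedBallSum μ x (fun n => tn n * ρ n) w z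
          * expandedUncenteredMaximal μ t g z ∂μ := by
  rw [lintegral_normalizedBallSum_mul hg.enorm, lintegral_normalizedBallSum_mul
    (lowerSemicontinuous_expandedUncenteredMaximal μ t g).measurable]
  gcongr with n
  exact setLAverage_le_setLAverage_expandedUncenteredMaximal (hfin n) (htn n).1 (htn n).2 g

end MetricSpace

theorem reverse_boman_covering_general
    {X : Type*} [MetricSpace X] [MeasurableSpace X] [BorelSpace X]
    (μ : Measure X) (hμ : μ ≠ 0)
    (hfin : ∀ s : Set X, Bornology.IsBounded s → μ s < ∞)
    (hdoub : ∃ Cd : ℝ≥0∞, 1 ≤ Cd ∧ ∀ (x : X) (r : ℝ), 0 < r →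
      μ (ball x (2 * r)) ≤ Cd * μ (ball x r) ∧ μ (ball x r) < ∞)
    (p q : ℝ) (hp : 1 < p) (hq : q = p / (p - 1))
    (t : ℝ)
    (C : ℝ≥0∞)
    (hC : ∀ h : X → ℝ, MemLp h (ENNReal.ofReal q) μ →
      lpNorm μ q (expandedUncenteredMaximal μ t h) ≤ C * lpNorm μ q (fun x => (‖h x‖₊ : ℝ≥0∞)))
    (N : ℕ) (x : Fin N → X) (r w tn : Fin N → ℝ)
    (hr : ∀ n, 0 < r n)
    (htn : ∀ n, 1 ≤ tn n ∧ tn n ≤ t) :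
    lpNorm μ p (fun y => ∑ n : Fin N, (closedBall (x n) (r n)).indicator
        (fun _ => ENNReal.ofReal (w n) / μ (closedBall (x n) (r n))) y)
      ≤ C * lpNorm μ p (fun y => ∑ n : Fin N, (closedBall (x n) (tn n * r n)).indicator
        (fun _ => ENNReal.ofReal (w n) / μ (closedBall (x n) (tn n * r n))) y) := by
  have hball : ∀ y s, μ (closedBall y s) ≠ ∞ := fun y s => (hfin _ isBounded_closedBall).ne
  obtain ⟨Cd, -, hCd⟩ := hdoub
  have hpos : ∀ n, μ (closedBall (x n) (r n)) ≠ 0 := fun n =>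
    ((measure_ball_pos_of_doubling hμ (fun y s hs => (hCd y s hs).1) (x n) (hr n)).trans_le
      (measure_mono ball_subset_closedBall)).ne'
  have hpq : p.HolderConjugate q := (Real.holderConjugate_iff_eq_conjExponent hp).2 hq
  set G := normalizedBallSum μ x (fun n => tn n * r n) w
  refine lpNorm_le_of_forall_lintegral_mul_le hpq measurable_normalizedBallSum
    (normalizedBallSum_ne_top hpos) (lintegral_normalizedBallSum_rpow_ne_top hpos
      (fun _ => hball _ _) hpq.pos) fun h hh_meas hh_mem => ?_
  calc ∫⁻ y, normalizedBallSum μ x r w y * ‖h y‖ₑ ∂μ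
      ≤ ∫⁻ y, G y * expandedUncenteredMaximal μ t h y ∂μ :=
        lintegral_normalizedBallSum_mul_le_maximal (fun _ _ => hball _ _) htn hh_meas
    _ ≤ lpNorm μ p G * lpNorm μ q (expandedUncenteredMaximal μ t h) :=
        ENNReal.lintegral_mul_le_Lp_mul_Lq μ hpq measurable_normalizedBallSum.aemeasurable
          (lowerSemicontinuous_expandedUncenteredMaximal μ t h).measurable.aemeasurable
    _ ≤ lpNorm μ p G * (C * lpNorm μ q (‖h ·‖ₑ)) := by gcongr; exact hC h hh_mem
    _ = C * lpNorm μ p G * lpNorm μ q (‖h ·‖ₑ) := by ring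

/-- **Reverse Boman covering lemma.**  If `μ` is doubling, `t ≥ 1`, and the expanded uncentered
maximal operator `M^{ut}_μ` is bounded on `L^q(μ)` with constant `C`, then for any finite sequence
of closed balls, positive weights, and dilations `1 ≤ t n ≤ t`,
`‖ Σ w n 1_{B(x n, r n)}/μ(B(x n, r n)) ‖_p ≤
 C ‖ Σ w n 1_{B(x n, t n r n)}/μ(B(x n, t n r n)) ‖_p`. -/
theorem reverse_boman_covering
    {X : Type*} [MetricSpace X] [MeasurableSpace X] [BorelSpace X]
    (μ : Measure X) (hμ : μ ≠ 0)
    (hfin : ∀ s : Set X, Bornology.IsBounded s → μ s < ∞)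
    (hdoub : ∃ Cd : ℝ≥0∞, 1 ≤ Cd ∧ ∀ (x : X) (r : ℝ), 0 < r →
      μ (ball x (2 * r)) ≤ Cd * μ (ball x r) ∧ μ (ball x r) < ∞)
    (p q : ℝ) (hp : 1 < p) (hq : q = p / (p - 1))
    (t : ℝ) (ht : 1 ≤ t)
    (C : ℝ≥0∞)
    (hC : ∀ h : X → ℝ, MemLp h (ENNReal.ofReal q) μ →
      lpNorm μ q (expandedUncenteredMaximal μ t h) ≤ C * lpNorm μ q (fun x => (‖h x‖₊ : ℝ≥0∞)))
    (N : ℕ) (x : Fin N → X) (r w tn : Fin N → ℝ)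
    (hr : ∀ n, 0 < r n)
    (hw : ∀ n, 0 < w n)
    (htn : ∀ n, 1 ≤ tn n ∧ tn n ≤ t) :
    lpNorm μ p (fun y => ∑ n : Fin N, (closedBall (x n) (r n)).indicator
        (fun _ => ENNReal.ofReal (w n) / μ (closedBall (x n) (r n))) y)
      ≤ C * lpNorm μ p (fun y => ∑ n : Fin N, (closedBall (x n) (tn n * r n)).indicator
        (fun _ => ENNReal.ofReal (w n) / μ (closedBall (x n) (tn n * r n))) y) :=
  reverse_boman_covering_general μ hμ hfin hdoub p q hp hq t C hC N x r w tn hr htn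
end
end

section
/- Let (X,d,μ) be a Vitali metric measure space with X second countable, let 1 < p < ∞ and q = p/(p-1). Assume (X,d,μ) has the weak q-Boman covering property with constant C. Then the centered maximal operator M_μ is of weak type (p,p) with constant C: for every f ∈ L^p(μ) and every a > 0, μ({M_μ f > a}) ≤ (C‖f‖_{L^p(μ)}/a)^p. -/
open MeasureTheory Metric ENNReal Set

noncomputable section

/-- The centered Hardy–Littlewood maximal operator. -/
def centeredMaximal {X : Type*} [MetricSpace X] [MeasurableSpace X]
    (μ : Measure X) (g : X → ℝ) (x : X) : ℝ≥0∞ :=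
  ⨆ (r : ℝ) (_ : 0 < r) (_ : 0 < μ (closedBall x r)),
    (∫⁻ z in closedBall x r, ‖g z‖₊ ∂μ) / μ (closedBall x r)

/-- `(X,d,μ)` is a Vitali metric measure space: for every set `A` and every family `ℬ` of
closed balls (coded by center–radius pairs) which covers `A` finely — i.e. every point of `A`
is the center of balls of `ℬ` of arbitrarily small positive radius — there is a pairwise
disjoint subfamily `𝒞 ⊆ ℬ` covering `μ`-almost all of `A`. -/
def VitaliSpace {X : Type*} [MetricSpace X] [MeasurableSpace X] (μ : Measure X) : Prop :=
  ∀ (A : Set X) (ℬ : Set (X × ℝ)),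
    (∀ b ∈ ℬ, 0 < b.2) →
    (∀ x ∈ A, ∀ ε : ℝ, 0 < ε → ∃ r : ℝ, 0 < r ∧ r < ε ∧ (x, r) ∈ ℬ) →
    ∃ 𝒞 ⊆ ℬ, 𝒞.PairwiseDisjoint (fun b => closedBall b.1 b.2) ∧
      μ (A \ ⋃ b ∈ 𝒞, closedBall b.1 b.2) = 0

/-- The weak `q`-Boman covering property with constant `C`: for every `r > 0` there is
`T r ∈ (0,1)` such that for all finite sequences of closed balls with centers in the support of
`μ`, weights `w n > 0`, and contractions `0 < t n ≤ T (r n)`, we have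
`‖ Σ w n 1_{B(x n, r n)}/μ(B(x n, r n)) ‖_q ≤
 C ‖ Σ w n 1_{B(x n, t n r n)}/μ(B(x n, t n r n)) ‖_q`. -/
def WeakBomanProperty {X : Type*} [MetricSpace X] [MeasurableSpace X]
    (μ : Measure X) (q : ℝ) (C : ℝ) : Prop :=
  ∃ T : ℝ → ℝ, (∀ r : ℝ, 0 < r → T r ∈ Set.Ioo (0 : ℝ) 1) ∧
    ∀ (N : ℕ) (x : Fin N → X) (r w t : Fin N → ℝ),
      (∀ n, 0 < r n) →
      (∀ n, ∀ ε : ℝ, 0 < ε → 0 < μ (ball (x n) ε)) →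
      (∀ n, 0 < w n) →
      (∀ n, 0 < t n ∧ t n ≤ T (r n)) →
      lpNorm μ q (fun y => ∑ n : Fin N, (closedBall (x n) (r n)).indicator
          (fun _ => ENNReal.ofReal (w n) / μ (closedBall (x n) (r n))) y)
        ≤ ENNReal.ofReal C * lpNorm μ q (fun y => ∑ n : Fin N,
            (closedBall (x n) (t n * r n)).indicator
          (fun _ => ENNReal.ofReal (w n) / μ (closedBall (x n) (t n * r n))) y)

/-!
For `x` in `{M f > a} ∩ supp μ` choose `R x > 0` with `a μ(B(x, R x)) ≤ ∫_{B(x, R x)} |f|`.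
The Vitali property gives disjoint balls `B(x_n, s_n)`, `s_n ≤ T(R x_n) R x_n`, covering almost
all of this set; they are countably many since `X` is separable, so it suffices to bound finite
sums `S = Σ μ(B(x_n, s_n))`. Testing `|f|` against
`g = Σ μ(B(x_n, s_n)) 1_{B(x_n, R x_n)} / μ(B(x_n, R x_n))` gives `a S ≤ ∫ g |f| ≤ ‖g‖_q ‖f‖_p`,
and the Boman inequality with contractions `s_n / R x_n` gives `‖g‖_q ≤ C ‖1_{⋃ B(x_n, s_n)}‖_q
= C S^{1/q}`. Hence `a S ≤ C ‖f‖_p S^{1/q}`, i.e. `S ≤ (C ‖f‖_p / a)^p` as `1 - 1/q = 1/p`.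
-/

open Function

theorem ENNReal.le_div_rpow_of_mul_le_mul_rpow {p q : ℝ} (hpq : p.HolderConjugate q)
    {S L a : ℝ≥0∞} (hS : S ≠ ∞) (ha₀ : a ≠ 0) (ha : a ≠ ∞) (h : a * S ≤ L * S ^ (1 / q)) :
    S ≤ (L / a) ^ p := by
  rcases eq_or_ne S 0 with rfl | hS₀
  · simp
  have hsplit : S = S ^ (1 / p) * S ^ (1 / q) := by
    rw [← ENNReal.rpow_add _ _ hS₀ hS, one_div, one_div, hpq.inv_add_inv_eq_one, ENNReal.rpow_one]
  have hSq₀ : S ^ (1 / q) ≠ 0 := (ENNReal.rpow_pos (pos_iff_ne_zero.2 hS₀) hS).ne'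
  have hSq : S ^ (1 / q) ≠ ∞ := ENNReal.rpow_ne_top_of_nonneg hpq.symm.one_div_nonneg hS
  nth_rw 1 [hsplit] at h
  rw [← mul_assoc, ENNReal.mul_le_mul_iff_left hSq₀ hSq] at h
  rw [← ENNReal.rpow_inv_le_iff hpq.pos, ← one_div,
    ENNReal.le_div_iff_mul_le (Or.inl ha₀) (Or.inl ha), mul_comm]
  exact h

theorem lpNorm_indicator_one {X : Type*} [MeasurableSpace X] {μ : Measure X} {q : ℝ} (hq : 0 < q)
    {U : Set X} (hU : MeasurableSet U) : lpNorm μ q (U.indicator 1) = μ U ^ (1 / q) := by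
  have hpow : ∀ x, U.indicator (1 : X → ℝ≥0∞) x ^ q = U.indicator 1 x := by
    intro x
    by_cases hx : x ∈ U <;> simp [hx, hq]
  simp only [_root_.lpNorm, hpow, lintegral_indicator_one hU]

theorem lpNorm_sum_indicator_one {X ι : Type*} [MeasurableSpace X] [Fintype ι] {μ : Measure X}
    {q : ℝ} (hq : 0 < q) {B : ι → Set X} (hB : ∀ i, MeasurableSet (B i))
    (hdisj : Pairwise (Disjoint on B)) :
    lpNorm μ q (fun x => ∑ i, (B i).indicator 1 x) = (∑ i, μ (B i)) ^ (1 / q) := by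
  have hdisj' : ((Finset.univ : Finset ι) : Set ι).PairwiseDisjoint B := hdisj.set_pairwise _
  simp_rw [← Finset.indicator_biUnion_apply _ _ hdisj']
  rw [lpNorm_indicator_one hq (Finset.measurableSet_biUnion _ fun i _ => hB i),
    measure_biUnion_finset hdisj' fun i _ => hB i]

theorem mul_sum_le_lintegral_sum_indicator_mul {X ι : Type*} [MeasurableSpace X] [Fintype ι]
    {μ : Measure X} {B : ι → Set X} (hB : ∀ i, MeasurableSet (B i)) (hB₀ : ∀ i, μ (B i) ≠ 0)
    (hB_top : ∀ i, μ (B i) ≠ ∞) {F : X → ℝ≥0∞} (hF : AEMeasurable F μ) {a : ℝ≥0∞}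
    (havg : ∀ i, a * μ (B i) ≤ ∫⁻ x in B i, F x ∂μ) (v : ι → ℝ≥0∞) :
    a * ∑ i, v i ≤ ∫⁻ x, (∑ i, (B i).indicator (fun _ => v i / μ (B i)) x) * F x ∂μ := by
  have hterm : ∀ i, ∫⁻ x, (B i).indicator (fun _ => v i / μ (B i)) x * F x ∂μ
      = v i / μ (B i) * ∫⁻ x in B i, F x ∂μ := by
    intro i
    rw [← lintegral_const_mul'' _ hF.restrict, ← lintegral_indicator (hB i)]
    congr 1 with x
    by_cases hx : x ∈ B i <;> simp [hx]
  calc a * ∑ i, v i = ∑ i, v i / μ (B i) * (a * μ (B i)) := by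
        rw [Finset.mul_sum]
        refine Finset.sum_congr rfl fun i _ => ?_
        rw [mul_left_comm, ENNReal.div_mul_cancel (hB₀ i) (hB_top i), mul_comm]
    _ ≤ ∑ i, v i / μ (B i) * ∫⁻ x in B i, F x ∂μ := by gcongr with i; exact havg i
    _ = ∫⁻ x, (∑ i, (B i).indicator (fun _ => v i / μ (B i)) x) * F x ∂μ := by
        simp_rw [Finset.sum_mul, ← hterm]
        exact (lintegral_finsetSum' _ fun i _ =>
          (measurable_const.indicator (hB i)).aemeasurable.mul hF).symm

theorem measure_ball_pos_of_mem_support {X : Type*} [MetricSpace X] [MeasurableSpace X]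
    {μ : Measure X} {x : X} (hx : x ∈ μ.support) {ε : ℝ} (hε : 0 < ε) : 0 < μ (ball x ε) :=
  (μ.mem_support_iff_forall x).1 hx _ (ball_mem_nhds x hε)

theorem measure_closedBall_pos_of_mem_support {X : Type*} [MetricSpace X] [MeasurableSpace X]
    {μ : Measure X} {x : X} (hx : x ∈ μ.support) {ε : ℝ} (hε : 0 < ε) :
    0 < μ (closedBall x ε) :=
  (measure_ball_pos_of_mem_support hx hε).trans_le (measure_mono ball_subset_closedBall)

section Boman

variable {X : Type*} [MetricSpace X] [MeasurableSpace X] {μ : Measure X} {q C : ℝ} {T : ℝ → ℝ}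

/-- `WeakBomanProperty μ q C` is `∃ T, (∀ r, 0 < r → T r ∈ Ioo 0 1) ∧ BomanInequality μ q C T`. -/
def BomanInequality (μ : Measure X) (q C : ℝ) (T : ℝ → ℝ) : Prop :=
  ∀ (N : ℕ) (x : Fin N → X) (r w t : Fin N → ℝ),
    (∀ n, 0 < r n) →
    (∀ n, ∀ ε : ℝ, 0 < ε → 0 < μ (ball (x n) ε)) →
    (∀ n, 0 < w n) →
    (∀ n, 0 < t n ∧ t n ≤ T (r n)) →
    lpNorm μ q (fun y => ∑ n : Fin N, (closedBall (x n) (r n)).indicator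
        (fun _ => ENNReal.ofReal (w n) / μ (closedBall (x n) (r n))) y)
      ≤ ENNReal.ofReal C * lpNorm μ q (fun y => ∑ n : Fin N,
          (closedBall (x n) (t n * r n)).indicator
        (fun _ => ENNReal.ofReal (w n) / μ (closedBall (x n) (t n * r n))) y)

theorem BomanInequality.of_fintype (hT : BomanInequality μ q C T) {ι : Type*} [Fintype ι]
    (x : ι → X) (r w t : ι → ℝ) (hr : ∀ i, 0 < r i) (hx : ∀ i, x i ∈ μ.support)
    (hw : ∀ i, 0 < w i) (ht : ∀ i, 0 < t i ∧ t i ≤ T (r i)) :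
    lpNorm μ q (fun y => ∑ i, (closedBall (x i) (r i)).indicator
        (fun _ => ENNReal.ofReal (w i) / μ (closedBall (x i) (r i))) y)
      ≤ ENNReal.ofReal C * lpNorm μ q (fun y => ∑ i, (closedBall (x i) (t i * r i)).indicator
        (fun _ => ENNReal.ofReal (w i) / μ (closedBall (x i) (t i * r i))) y) := by
  let e := (Fintype.equivFin ι).symm
  have := hT _ (x ∘ e) (r ∘ e) (w ∘ e) (t ∘ e) (fun n => hr _)
    (fun n _ hε => measure_ball_pos_of_mem_support (hx _) hε) (fun n => hw _) (fun n => ht _)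
  convert this using 4 <;> exact (Fintype.sum_equiv e _ _ fun _ => rfl).symm

variable [OpensMeasurableSpace X]

theorem BomanInequality.lpNorm_le_rpow_sum_measure (hT : BomanInequality μ q C T) (hq : 0 < q)
    (hfin : ∀ s : Set X, Bornology.IsBounded s → μ s < ∞) {ι : Type*} [Fintype ι]
    {c : ι → X} {r s : ι → ℝ} (hc : ∀ i, c i ∈ μ.support) (hr : ∀ i, 0 < r i)
    (hs : ∀ i, 0 < s i ∧ s i ≤ T (r i) * r i)
    (hdisj : Pairwise (Disjoint on fun i => closedBall (c i) (s i))) :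
    lpNorm μ q (fun y => ∑ i, (closedBall (c i) (r i)).indicator
        (fun _ => μ (closedBall (c i) (s i)) / μ (closedBall (c i) (r i))) y)
      ≤ ENNReal.ofReal C * (∑ i, μ (closedBall (c i) (s i))) ^ (1 / q) := by
  have hs₀ : ∀ i, μ (closedBall (c i) (s i)) ≠ 0 :=
    fun i => (measure_closedBall_pos_of_mem_support (hc i) (hs i).1).ne'
  have hs_top : ∀ i, μ (closedBall (c i) (s i)) ≠ ∞ := fun i => (hfin _ isBounded_closedBall).ne
  have hsr : ∀ i, s i / r i * r i = s i := fun i => div_mul_cancel₀ _ (hr i).ne'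
  -- with weights `μ (closedBall (c i) (s i))` the contracted sum is the indicator of the union
  have := hT.of_fintype c r (fun i => (μ (closedBall (c i) (s i))).toReal) (fun i => s i / r i)
    hr hc (fun i => ENNReal.toReal_pos (hs₀ i) (hs_top i))
    (fun i => ⟨div_pos (hs i).1 (hr i), (div_le_iff₀ (hr i)).2 (hs i).2⟩)
  simp only [ENNReal.ofReal_toReal (hs_top _), hsr, ENNReal.div_self (hs₀ _) (hs_top _)] at this
  rwa [← lpNorm_sum_indicator_one hq (fun i => measurableSet_closedBall) hdisj]

theorem BomanInequality.sum_measure_le {p : ℝ} (hT : BomanInequality μ q C T)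
    (hpq : p.HolderConjugate q) (hfin : ∀ s : Set X, Bornology.IsBounded s → μ s < ∞)
    {F : X → ℝ≥0∞} (hF : AEMeasurable F μ) {a : ℝ≥0∞} (ha₀ : a ≠ 0) (ha : a ≠ ∞)
    {ι : Type*} [Fintype ι] {c : ι → X} {r s : ι → ℝ} (hc : ∀ i, c i ∈ μ.support)
    (hr : ∀ i, 0 < r i) (hs : ∀ i, 0 < s i ∧ s i ≤ T (r i) * r i)
    (hdisj : Pairwise (Disjoint on fun i => closedBall (c i) (s i)))
    (havg : ∀ i, a * μ (closedBall (c i) (r i)) ≤ ∫⁻ x in closedBall (c i) (r i), F x ∂μ) :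
    ∑ i, μ (closedBall (c i) (s i)) ≤ (ENNReal.ofReal C * lpNorm μ p F / a) ^ p := by
  set S := ∑ i, μ (closedBall (c i) (s i))
  set g : X → ℝ≥0∞ := fun y => ∑ i, (closedBall (c i) (r i)).indicator
    (fun _ => μ (closedBall (c i) (s i)) / μ (closedBall (c i) (r i))) y
  have hg : AEMeasurable g μ := (Finset.measurable_sum _ fun i _ =>
    measurable_const.indicator measurableSet_closedBall).aemeasurable
  have hS : S ≠ ∞ := ENNReal.sum_ne_top.2 fun i _ => (hfin _ isBounded_closedBall).ne
  refine ENNReal.le_div_rpow_of_mul_le_mul_rpow hpq hS ha₀ ha ?_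
  calc a * S ≤ ∫⁻ x, g x * F x ∂μ :=
        mul_sum_le_lintegral_sum_indicator_mul (fun i => measurableSet_closedBall)
          (fun i => (measure_closedBall_pos_of_mem_support (hc i) (hr i)).ne')
          (fun i => (hfin _ isBounded_closedBall).ne) hF havg _
    _ ≤ lpNorm μ q g * lpNorm μ p F :=
        ENNReal.lintegral_mul_le_Lp_mul_Lq μ hpq.symm hg hF
    _ ≤ ENNReal.ofReal C * S ^ (1 / q) * lpNorm μ p F := by
        gcongr
        exact hT.lpNorm_le_rpow_sum_measure hpq.symm.pos hfin hc hr hs hdisj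
    _ = ENNReal.ofReal C * lpNorm μ p F * S ^ (1 / q) := mul_right_comm _ _ _

end Boman

theorem VitaliSpace.measure_le_of_sum_le {X : Type*} [MetricSpace X] [MeasurableSpace X]
    [TopologicalSpace.SeparableSpace X] {μ : Measure X} (hV : VitaliSpace μ) {A : Set X}
    {ℬ : Set (X × ℝ)} (hℬ : ∀ b ∈ ℬ, 0 < b.2)
    (hfine : ∀ x ∈ A, ∀ ε : ℝ, 0 < ε → ∃ r : ℝ, 0 < r ∧ r < ε ∧ (x, r) ∈ ℬ) {c : ℝ≥0∞}
    (hsum : ∀ 𝒮 : Finset (X × ℝ), ↑𝒮 ⊆ ℬ →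
      (𝒮 : Set (X × ℝ)).PairwiseDisjoint (fun b => closedBall b.1 b.2) →
      ∑ b ∈ 𝒮, μ (closedBall b.1 b.2) ≤ c) :
    μ A ≤ c := by
  obtain ⟨𝒞, h𝒞ℬ, hdisj, hnull⟩ := hV A ℬ hℬ hfine
  have h𝒞 : 𝒞.Countable := (hdisj.mono fun b => ball_subset_closedBall).countable_of_isOpen
    (fun _ _ => isOpen_ball) fun b hb => nonempty_ball.2 (hℬ b (h𝒞ℬ hb))
  calc μ A ≤ μ (⋃ b ∈ 𝒞, closedBall b.1 b.2) := measure_mono_ae (ae_le_set.2 hnull)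
    _ ≤ ∑' b : 𝒞, μ (closedBall b.1.1 b.1.2) := measure_biUnion_le μ h𝒞 _
    _ ≤ c := ENNReal.summable.tsum_le_of_sum_le fun 𝒮 => by
        have h𝒮 : ↑(𝒮.map (Embedding.subtype _)) ⊆ 𝒞 := fun b hb => by
          obtain ⟨b, -, rfl⟩ := Finset.mem_map.1 hb
          exact b.2
        simpa using hsum _ (h𝒮.trans h𝒞ℬ) (hdisj.subset h𝒮)

theorem exists_mul_measure_le_lintegral_of_lt_centeredMaximal {X : Type*} [MetricSpace X]
    [MeasurableSpace X] {μ : Measure X} (hfin : ∀ s : Set X, Bornology.IsBounded s → μ s < ∞)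
    {f : X → ℝ} {a : ℝ≥0∞} {x : X} (h : a < centeredMaximal μ f x) :
    ∃ r, 0 < r ∧ a * μ (closedBall x r) ≤ ∫⁻ z in closedBall x r, ‖f z‖₊ ∂μ := by
  obtain ⟨r, hr, hμr, hlt⟩ : ∃ r, 0 < r ∧ 0 < μ (closedBall x r) ∧
      a < (∫⁻ z in closedBall x r, ‖f z‖₊ ∂μ) / μ (closedBall x r) := by
    simpa only [centeredMaximal, lt_iSup_iff, exists_prop] using h
  exact ⟨r, hr, (ENNReal.lt_div_iff_mul_lt (Or.inl hμr.ne')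
    (Or.inl (hfin _ isBounded_closedBall).ne)).1 hlt |>.le⟩

theorem weak_type_of_weakBoman_of_vitali_general
    {X : Type*} [MetricSpace X] [MeasurableSpace X] [BorelSpace X]
    [SecondCountableTopology X]
    (μ : Measure X)
    (hfin : ∀ s : Set X, Bornology.IsBounded s → μ s < ∞)
    (hVitali : VitaliSpace μ)
    (p q : ℝ) (hp : 1 < p) (hq : q = p / (p - 1))
    (C : ℝ)
    (hB : WeakBomanProperty μ q C)
    (f : X → ℝ) (hf : MemLp f (ENNReal.ofReal p) μ)
    (a : ℝ) (ha : 0 < a) :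
    μ {y | ENNReal.ofReal a < centeredMaximal μ f y}
      ≤ (ENNReal.ofReal C * lpNorm μ p (fun y => (‖f y‖₊ : ℝ≥0∞)) / ENNReal.ofReal a) ^ p := by
  obtain ⟨T, hT_pos, hT⟩ := hB
  replace hT : BomanInequality μ q C T := hT
  have hpq : p.HolderConjugate q := (Real.holderConjugate_iff_eq_conjExponent hp).2 hq
  have hF : AEMeasurable (fun y => (‖f y‖₊ : ℝ≥0∞)) μ :=
    hf.1.aemeasurable.nnnorm.coe_nnreal_ennreal
  set E := {y | ENNReal.ofReal a < centeredMaximal μ f y}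
  choose! R hR_pos hR_avg using fun x (hx : x ∈ E) =>
    exists_mul_measure_le_lintegral_of_lt_centeredMaximal hfin hx
  -- Boman's inequality only allows centres in the support, whose complement is null
  rw [← measure_inter_conull μ.measure_compl_support]
  refine hVitali.measure_le_of_sum_le
    (ℬ := {b | b.1 ∈ E ∩ μ.support ∧ 0 < b.2 ∧ b.2 ≤ T (R b.1) * R b.1})
    (fun b hb => hb.2.1) (fun x hx ε hε => ?_) fun 𝒮 h𝒮 hdisj => ?_
  · have hTR : 0 < T (R x) * R x := mul_pos (hT_pos _ (hR_pos x hx.1)).1 (hR_pos x hx.1)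
    exact ⟨min (ε / 2) (T (R x) * R x), lt_min (half_pos hε) hTR,
      (min_le_left _ _).trans_lt (half_lt_self hε), hx, lt_min (half_pos hε) hTR, min_le_right _ _⟩
  · rw [← Finset.sum_coe_sort]
    exact hT.sum_measure_le hpq hfin hF (ENNReal.ofReal_pos.2 ha).ne' ENNReal.ofReal_ne_top
      (c := fun b : 𝒮 => b.1.1) (r := fun b => R b.1.1) (fun b => (h𝒮 b.2).1.2)
      (fun b => hR_pos _ (h𝒮 b.2).1.1) (fun b => (h𝒮 b.2).2) (hdisj.subtype _ _)
      fun b => hR_avg _ (h𝒮 b.2).1.1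

/-- If a Vitali (second countable) metric measure space has the weak `q`-Boman covering property
with constant `C`, where `q = p/(p-1)`, then the centered maximal operator is of weak type
`(p,p)` with constant `C`. -/
theorem weak_type_of_weakBoman_of_vitali
    {X : Type*} [MetricSpace X] [MeasurableSpace X] [BorelSpace X]
    [SecondCountableTopology X]
    (μ : Measure X) (hμ : μ ≠ 0)
    (hfin : ∀ s : Set X, Bornology.IsBounded s → μ s < ∞)
    (hVitali : VitaliSpace μ)
    (p q : ℝ) (hp : 1 < p) (hq : q = p / (p - 1))
    (C : ℝ) (hC : 0 < C)
    (hB : WeakBomanProperty μ q C)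
    (f : X → ℝ) (hf : MemLp f (ENNReal.ofReal p) μ)
    (a : ℝ) (ha : 0 < a) :
    μ {y | ENNReal.ofReal a < centeredMaximal μ f y}
      ≤ (ENNReal.ofReal C * lpNorm μ p (fun y => (‖f y‖₊ : ℝ≥0∞)) / ENNReal.ofReal a) ^ p :=
  weak_type_of_weakBoman_of_vitali_general μ hfin hVitali p q hp hq C hB f hf a ha

end
end

section
/- Let X := A ∪ (∪_{n≥0} A_n) ⊂ ℝ², where A = ℝ × {0} and A_n = [4n, 4n + 2^{-n}] × {2^{-n}}, equipped with the metric induced by the ℓ₁ norm on ℝ², and let μ be the Borel measure on X that equals one-dimensional Lebesgue measure on A and 2^{-n} times one-dimensional Lebesgue measure on each A_n. Then μ is doubling at large scales: for every integer n ≥ 0 and every R ≥ 2^{-n}, for all x ∈ X and all r > R one has μ(B(x,2r)) ≤ 2^{3+n} · μ(B(x,r)) < ∞. -/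
open MeasureTheory Metric ENNReal Set

noncomputable section

/-- The plane `ℝ²` with the `ℓ¹` norm (so distances are `|x₁−y₁| + |x₂−y₂|`). -/
abbrev L1Plane := WithLp 1 (ℝ × ℝ)

instance : MeasurableSpace L1Plane := borel L1Plane
instance : BorelSpace L1Plane := ⟨rfl⟩

/-- The point `(s, c)` of the `ℓ¹` plane. -/
def pt (s c : ℝ) : L1Plane := (WithLp.equiv 1 (ℝ × ℝ)).symm (s, c)

/-- The horizontal axis `A = ℝ × {0}`. -/
def lineA : Set L1Plane := {z | (WithLp.equiv 1 (ℝ × ℝ) z).2 = 0}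

/-- The segment `A_n = [4n, 4n + 2^{-n}] × {2^{-n}}`. -/
def segA (n : ℕ) : Set L1Plane :=
  (fun s : ℝ => pt s ((2 : ℝ) ^ (-(n : ℤ)))) '' Icc (4 * (n : ℝ)) (4 * (n : ℝ) + 2 ^ (-(n : ℤ)))

/-- The space `X = A ∪ ⋃_n A_n`, as a subset of the `ℓ¹` plane. -/
def Xset : Set L1Plane := lineA ∪ ⋃ n : ℕ, segA n

/-- The measure on the `ℓ¹` plane which is one-dimensional Lebesgue measure on `A` and
`2^{-n}` times one-dimensional Lebesgue measure on each `A_n`. -/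
def μ₀ : Measure L1Plane :=
  (volume : Measure ℝ).map (fun s => pt s 0) +
    Measure.sum (fun n : ℕ =>
      ENNReal.ofReal ((2 : ℝ) ^ (-(n : ℤ))) •
        ((volume : Measure ℝ).restrict
            (Icc (4 * (n : ℝ)) (4 * (n : ℝ) + 2 ^ (-(n : ℤ)))) |>.map
          (fun s => pt s ((2 : ℝ) ^ (-(n : ℤ))))))

/-- The induced measure on the subspace `X`. -/
def μX : Measure ↥Xset := μ₀.comap Subtype.val

/-! Since `r > 2^{-n}`, we have `2^{3+n} r > 8`. The segments carry total mass at most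
`∑ 2^{-k} = 2`, so every ball of radius `ρ` has measure at most `2ρ + 2`; the segments are
`3`-separated, so a ball of radius `ρ ≤ 3` centred on `A_m` meets no other segment and has measure
at most `4ρ`. From below, a ball of radius `r` centred on `A` has measure at least `2r`, and one
centred on `A_m` at least `r · min r 1`, as it contains a piece of `A` of length `2(r - 2^{-m})`
and a piece of `A_m` of length `min r 2^{-m}`. -/

-- `𝔥 n` is the height, the length and the weight of the segment `A_n`.
local notation "𝔥" n:max => ((2 : ℝ) ^ (-((n : ℕ) : ℤ)))

lemma dist_pt (s c t d : ℝ) : dist (pt s c) (pt t d) = |s - t| + |c - d| := by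
  rw [WithLp.prod_dist_eq_add (by norm_num)]
  simp [pt, Real.dist_eq]

lemma isometry_pt (c : ℝ) : Isometry (fun s : ℝ => pt s c) :=
  Isometry.of_dist_eq fun s t => by simp [dist_pt, Real.dist_eq]

lemma measurable_pt (c : ℝ) : Measurable (fun s : ℝ => pt s c) :=
  (isometry_pt c).continuous.measurable

lemma preimage_pt_ball (a b c r : ℝ) :
    (fun s : ℝ => pt s c) ⁻¹' ball (pt a b) r = ball a (r - |c - b|) := by
  ext s
  simp only [mem_preimage, mem_ball, dist_pt, Real.dist_eq]
  constructor <;> intro h <;> linarith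

lemma height_pos (n : ℕ) : 0 < 𝔥 n := by positivity

lemma height_le_one (n : ℕ) : 𝔥 n ≤ 1 :=
  zpow_le_one_of_nonpos₀ one_le_two (by simp)

lemma tsum_height : ∑' n : ℕ, ENNReal.ofReal (𝔥 n) = 2 := by
  have h : ∀ n : ℕ, 𝔥 n = (2⁻¹ : ℝ) ^ n := fun n => by rw [zpow_neg, zpow_natCast, inv_pow]
  simp_rw [h]
  rw [← ENNReal.ofReal_tsum_of_nonneg (fun n => by positivity)
    (summable_geometric_of_lt_one (by norm_num) (by norm_num)), tsum_geometric_inv_two]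
  simp

lemma eq_pt_of_mem_Xset {z : L1Plane} (hz : z ∈ Xset) :
    (∃ a, z = pt a 0) ∨ ∃ m : ℕ, ∃ a ∈ Icc (4 * (m : ℝ)) (4 * m + 𝔥 m), z = pt a (𝔥 m) := by
  rcases hz with hz | hz
  · exact Or.inl ⟨(WithLp.equiv 1 (ℝ × ℝ) z).1, by rw [← hz]; rfl⟩
  · obtain ⟨m, a, ha, rfl⟩ := mem_iUnion.1 hz
    exact Or.inr ⟨m, a, ha, rfl⟩

lemma three_le_abs_sub_of_mem_segment {k m : ℕ} (hkm : k ≠ m) {s a : ℝ}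
    (hs : s ∈ Icc (4 * (k : ℝ)) (4 * k + 𝔥 k)) (ha : a ∈ Icc (4 * (m : ℝ)) (4 * m + 𝔥 m)) :
    3 ≤ |s - a| := by
  have hk := height_le_one k
  have hm := height_le_one m
  rcases Nat.lt_or_gt_of_ne hkm with h | h
  · have : (k : ℝ) + 1 ≤ m := by exact_mod_cast h
    linarith [neg_abs_le (s - a), hs.2, ha.1]
  · have : (m : ℝ) + 1 ≤ k := by exact_mod_cast h
    linarith [le_abs_self (s - a), hs.1, ha.2]

lemma measurableSet_Xset : MeasurableSet Xset := by
  refine .union ?_ (.iUnion fun n => ?_)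
  · exact (isClosed_eq (WithLp.continuous_snd 1 ℝ ℝ) continuous_const).measurableSet
  · exact (isCompact_Icc.image (isometry_pt _).continuous).isClosed.measurableSet

lemma μ₀_apply {S : Set L1Plane} (hS : MeasurableSet S) :
    μ₀ S = volume ((fun s : ℝ => pt s 0) ⁻¹' S) + ∑' n : ℕ, ENNReal.ofReal (𝔥 n) *
      volume ((fun s : ℝ => pt s (𝔥 n)) ⁻¹' S ∩ Icc (4 * (n : ℝ)) (4 * n + 𝔥 n)) := by
  rw [μ₀, Measure.add_apply, Measure.map_apply (measurable_pt 0) hS, Measure.sum_apply _ hS]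
  congr 1
  refine tsum_congr fun n => ?_
  rw [Measure.smul_apply, Measure.map_apply (measurable_pt _) hS,
    Measure.restrict_apply (measurable_pt _ hS), smul_eq_mul]

lemma μ₀_compl_Xset : μ₀ Xsetᶜ = 0 := by
  rw [μ₀_apply measurableSet_Xset.compl, add_eq_zero, ENNReal.tsum_eq_zero]
  refine ⟨?_, fun n => ?_⟩
  · convert measure_empty (μ := volume)
    exact eq_empty_of_forall_notMem fun s hs => hs (Or.inl rfl)
  · convert mul_zero _
    convert measure_empty (μ := volume)
    exact eq_empty_of_forall_notMem fun s hs =>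
      hs.1 (Or.inr (mem_iUnion.2 ⟨n, mem_image_of_mem _ hs.2⟩))

lemma μX_ball (x : ↥Xset) (r : ℝ) : μX (ball x r) = μ₀ (ball (x : L1Plane) r) := by
  rw [μX, MeasurableEmbedding.comap_apply (.subtype_coe measurableSet_Xset)]
  have : ball x r = Subtype.val ⁻¹' ball (x : L1Plane) r := rfl
  rw [this, Subtype.image_preimage_coe, inter_comm, measure_inter_conull μ₀_compl_Xset]

lemma μ₀_ball (a b r : ℝ) :
    μ₀ (ball (pt a b) r) = ENNReal.ofReal (2 * (r - |b|)) + ∑' n : ℕ, ENNReal.ofReal (𝔥 n) *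
      volume (ball a (r - |𝔥 n - b|) ∩ Icc (4 * (n : ℝ)) (4 * n + 𝔥 n)) := by
  simp_rw [μ₀_apply measurableSet_ball, preimage_pt_ball, Real.volume_ball, zero_sub, abs_neg]

lemma μ₀_ball_le (a b : ℝ) {ρ : ℝ} (hρ : 0 ≤ ρ) :
    μ₀ (ball (pt a b) ρ) ≤ ENNReal.ofReal (2 * ρ + 2) := by
  have hseg (n : ℕ) : volume (ball a (ρ - |𝔥 n - b|) ∩ Icc (4 * (n : ℝ)) (4 * n + 𝔥 n)) ≤ 1 :=
    calc _ ≤ volume (Icc (4 * (n : ℝ)) (4 * n + 𝔥 n)) := measure_mono inter_subset_right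
      _ = ENNReal.ofReal (𝔥 n) := by rw [Real.volume_Icc, add_sub_cancel_left]
      _ ≤ 1 := ENNReal.ofReal_le_one.2 (height_le_one n)
  rw [μ₀_ball, ENNReal.ofReal_add (by positivity) zero_le_two, ENNReal.ofReal_ofNat]
  gcongr
  · linarith [abs_nonneg b]
  · calc _ ≤ ∑' n : ℕ, ENNReal.ofReal (𝔥 n) * 1 :=
          ENNReal.tsum_le_tsum fun n => by gcongr; exact hseg n
      _ = 2 := by simp_rw [mul_one, tsum_height]

lemma μ₀_ball_segment_le_of_le_three {m : ℕ} {a ρ : ℝ} (ha : a ∈ Icc (4 * (m : ℝ)) (4 * m + 𝔥 m))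
    (hρ₀ : 0 ≤ ρ) (hρ₃ : ρ ≤ 3) : μ₀ (ball (pt a (𝔥 m)) ρ) ≤ ENNReal.ofReal (4 * ρ) := by
  have hfar (k : ℕ) (hk : k ≠ m) :
      ENNReal.ofReal (𝔥 k) * volume (ball a (ρ - |𝔥 k - 𝔥 m|) ∩ Icc (4 * (k : ℝ)) (4 * k + 𝔥 k))
        = 0 := by
    convert mul_zero _
    convert measure_empty (μ := volume)
    refine eq_empty_of_forall_notMem fun s ⟨hs, hsk⟩ => ?_
    rw [mem_ball, Real.dist_eq] at hs
    linarith [three_le_abs_sub_of_mem_segment hk hsk ha, abs_nonneg (𝔥 k - 𝔥 m)]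
  rw [μ₀_ball, tsum_eq_single m hfar, sub_self, abs_zero, sub_zero]
  calc _ ≤ ENNReal.ofReal (2 * ρ) + 1 * volume (ball a ρ) := by
        gcongr
        · linarith [abs_nonneg (𝔥 m)]
        · exact ENNReal.ofReal_le_one.2 (height_le_one m)
        · exact inter_subset_left
    _ = ENNReal.ofReal (4 * ρ) := by
        rw [one_mul, Real.volume_ball, ← ENNReal.ofReal_add (by positivity) (by positivity)]
        ring_nf

lemma μ₀_ball_segment_le {m : ℕ} {a ρ : ℝ} (ha : a ∈ Icc (4 * (m : ℝ)) (4 * m + 𝔥 m))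
    (hρ : 0 ≤ ρ) : μ₀ (ball (pt a (𝔥 m)) ρ) ≤ ENNReal.ofReal (4 * ρ) := by
  rcases le_or_gt ρ 3 with hρ₃ | hρ₃
  · exact μ₀_ball_segment_le_of_le_three ha hρ hρ₃
  · exact (μ₀_ball_le a _ hρ).trans (ENNReal.ofReal_le_ofReal (by linarith))

lemma ofReal_le_μ₀_ball (a b r : ℝ) : ENNReal.ofReal (2 * (r - |b|)) ≤ μ₀ (ball (pt a b) r) := by
  rw [μ₀_ball]
  exact le_self_add

lemma ofReal_min_le_volume_ball_inter_Icc {a c d r : ℝ} (ha : a ∈ Icc c d) (hr : 0 ≤ r) :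
    ENNReal.ofReal (min r (d - c)) ≤ volume (ball a r ∩ Icc c d) := by
  set t := min r (d - c)
  have ht : 0 ≤ t := le_min hr (by linarith [ha.1, ha.2])
  calc ENNReal.ofReal t ≤ volume (Ioo (max c (a - t)) (min d (a + t))) := by
        rw [Real.volume_Ioo]
        refine ENNReal.ofReal_le_ofReal (le_sub_iff_add_le.2 ?_)
        rw [← max_add_add_left]
        exact max_le (le_min (by linarith [min_le_right r (d - c)]) (by linarith [ha.1]))
          (le_min (by linarith [ha.2]) (by linarith))
    _ ≤ volume (ball a r ∩ Icc c d) := by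
        refine measure_mono fun s ⟨hs₁, hs₂⟩ => ⟨?_, ?_, ?_⟩
        · rw [mem_ball, Real.dist_eq, abs_sub_lt_iff]
          constructor <;> linarith [max_lt_iff.1 hs₁, lt_min_iff.1 hs₂, min_le_left r (d - c)]
        · linarith [le_max_left c (a - t)]
        · linarith [min_le_left d (a + t)]

lemma ofReal_mul_min_one_le {r w : ℝ} (hr : 0 ≤ r) (hw₀ : 0 ≤ w) (hw₁ : w ≤ 1) :
    ENNReal.ofReal (r * min r 1) ≤ ENNReal.ofReal (2 * (r - w)) + ENNReal.ofReal (w * min r w) := by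
  rcases le_total r w with hrw | hwr
  · refine le_add_left (ENNReal.ofReal_le_ofReal ?_)
    rw [min_eq_left (hrw.trans hw₁), min_eq_left hrw]
    exact mul_le_mul_of_nonneg_right hrw hr
  · rw [← ENNReal.ofReal_add (by linarith) (by positivity), min_eq_right hwr]
    refine ENNReal.ofReal_le_ofReal ?_
    rcases le_total r 1 with hr₁ | hr₁
    · rw [min_eq_left hr₁]
      nlinarith [mul_nonneg (sub_nonneg.2 hwr) (by linarith : (0 : ℝ) ≤ 2 - r - w)]
    · rw [min_eq_right hr₁]
      nlinarith [sq_nonneg (1 - w)]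

lemma ofReal_mul_min_one_le_μ₀_ball_segment {m : ℕ} {a r : ℝ}
    (ha : a ∈ Icc (4 * (m : ℝ)) (4 * m + 𝔥 m)) (hr : 0 ≤ r) :
    ENNReal.ofReal (r * min r 1) ≤ μ₀ (ball (pt a (𝔥 m)) r) := by
  refine (ofReal_mul_min_one_le hr (height_pos m).le (height_le_one m)).trans ?_
  rw [μ₀_ball, abs_of_pos (height_pos m)]
  gcongr
  refine le_trans ?_ (ENNReal.le_tsum m)
  rw [sub_self, abs_zero, sub_zero, ENNReal.ofReal_mul (height_pos m).le]
  gcongr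
  simpa using ofReal_min_le_volume_ball_inter_Icc ha hr

lemma le_ofReal_mul_of_le_of_le {A B : ℝ≥0∞} {u l K : ℝ} (hA : A ≤ ENNReal.ofReal u)
    (hB : ENNReal.ofReal l ≤ B) (hK : 0 ≤ K) (h : u ≤ K * l) : A ≤ ENNReal.ofReal K * B :=
  calc A ≤ ENNReal.ofReal (K * l) := hA.trans (ENNReal.ofReal_le_ofReal h)
    _ ≤ ENNReal.ofReal K * B := by rw [ENNReal.ofReal_mul hK]; gcongr

/-- On the space `X = A ∪ ⋃_n A_n` of Example 13 (with the `ℓ¹` metric and the measure that is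
Lebesgue on `A` and `2^{-n}`·Lebesgue on `A_n`), the measure is doubling at large scales: for
every `n` and every `R ≥ 2^{-n}`, for all `x ∈ X` and all radii `r > R`,
`μ(B(x,2r)) ≤ 2^{3+n} μ(B(x,r)) < ∞`. -/
theorem example_doubling_at_large_scales :
    ∀ n : ℕ, ∀ R : ℝ, (2 : ℝ) ^ (-(n : ℤ)) ≤ R →
      ∀ x : ↥Xset, ∀ r : ℝ, R < r →
        μX (ball x (2 * r)) ≤ (2 : ℝ≥0∞) ^ (3 + n) * μX (ball x r) ∧
        μX (ball x r) < ∞ := by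
  intro n R hR x r hr
  have hr₀ : 0 < r := (height_pos n).trans_le hR |>.trans hr
  have hK : (8 : ℝ) ≤ 2 ^ (3 + n) :=
    calc (8 : ℝ) = 2 ^ 3 := by norm_num
      _ ≤ 2 ^ (3 + n) := pow_le_pow_right₀ one_le_two (by omega)
  have hKr : 8 < 2 ^ (3 + n) * r :=
    calc (8 : ℝ) = 2 ^ (3 + n) * 𝔥 n := by
          rw [zpow_neg, zpow_natCast, pow_add, mul_assoc, mul_inv_cancel₀ (by positivity)]
          norm_num
      _ < 2 ^ (3 + n) * r := mul_lt_mul_of_pos_left (hR.trans_lt hr) (by positivity)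
  rw [μX_ball, μX_ball, ← ENNReal.ofReal_ofNat, ← ENNReal.ofReal_pow zero_le_two]
  rcases eq_pt_of_mem_Xset x.2 with ⟨a, hx⟩ | ⟨m, a, ha, hx⟩ <;> rw [hx] <;>
    refine ⟨?_, (μ₀_ball_le _ _ hr₀.le).trans_lt ofReal_lt_top⟩
  · refine le_ofReal_mul_of_le_of_le (μ₀_ball_le a 0 (by positivity)) (ofReal_le_μ₀_ball a 0 r)
      (by positivity) ?_
    rw [abs_zero, sub_zero]
    nlinarith
  · refine le_ofReal_mul_of_le_of_le (μ₀_ball_segment_le ha (by positivity))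
      (ofReal_mul_min_one_le_μ₀_ball_segment ha hr₀.le) (by positivity) ?_
    have hKmin : 8 ≤ 2 ^ (3 + n) * min r 1 := by
      rw [mul_min_of_nonneg _ _ (by positivity)]
      exact le_min hKr.le (by simpa using hK)
    nlinarith

end
end
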